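/- arXiv:1902.07689 — 2 statements merged into one kernel-verified Lean document; each statement's English description precedes it below -/
import Mathlib

section
/- Let 𝓛 be a nest on a complex separable Hilbert space H, and let N, M ∈ 𝓛 with N ⊊ M. Then there exists x ∈ H such that M_x = M and M̂_x = N. -/
open scoped InnerProductSpace

variable {H : Type*} [NormedAddCommGroup H] [InnerProductSpace ℂ H]
  [CompleteSpace H] [TopologicalSpace.SeparableSpace H]

/-- A subspace lattice on `H`: a set of closed subspaces containing `⊥` and `⊤`,
closed under arbitrary intersections and closed linear spans. -/
def IsSubspaceLattice (𝓛 : Set (Submodule ℂ H)) : Prop :=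
  (∀ M ∈ 𝓛, IsClosed (M : Set H)) ∧ ⊥ ∈ 𝓛 ∧ ⊤ ∈ 𝓛 ∧
  (∀ S ⊆ 𝓛, sInf S ∈ 𝓛) ∧ (∀ S ⊆ 𝓛, (sSup S).topologicalClosure ∈ 𝓛)

/-- A nest: a totally ordered subspace lattice. -/
def IsNest (𝓛 : Set (Submodule ℂ H)) : Prop :=
  IsSubspaceLattice 𝓛 ∧ ∀ M ∈ 𝓛, ∀ N ∈ 𝓛, M ≤ N ∨ N ≤ M

/-- A continuous nest. -/
def IsContinuousNest (𝓛 : Set (Submodule ℂ H)) : Prop :=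
  IsNest 𝓛 ∧ ∀ M ∈ 𝓛, M = (sSup {N ∈ 𝓛 | N < M}).topologicalClosure

/-- `M_x`: the intersection of all members of `𝓛` containing `x`. -/
noncomputable def Mx (𝓛 : Set (Submodule ℂ H)) (x : H) : Submodule ℂ H :=
  sInf {M ∈ 𝓛 | x ∈ M}

/-- `M̂_x`: the closed span of all members of `𝓛` orthogonal to `x`. -/
noncomputable def Mhat (𝓛 : Set (Submodule ℂ H)) (x : H) : Submodule ℂ H :=
  (sSup {M ∈ 𝓛 | ∀ v ∈ M, inner ℂ x v = (0 : ℂ)}).topologicalClosure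

/-- `φ_T(M)`: the closed span of all members `M'` of `𝓛` with `T(M') ⊆ M`. -/
noncomputable def phiT (𝓛 : Set (Submodule ℂ H)) (T : H →L[ℂ] H) (M : Submodule ℂ H) :
    Submodule ℂ H :=
  (sSup {M' ∈ 𝓛 | ∀ v ∈ M', T v ∈ M}).topologicalClosure

/-- `Ψ_T(M)`: the intersection of all `M' ∈ 𝓛` with `φ_T(M') = φ_T(M)`. -/
noncomputable def PsiT (𝓛 : Set (Submodule ℂ H)) (T : H →L[ℂ] H) (M : Submodule ℂ H) :
    Submodule ℂ H :=
  sInf {M' ∈ 𝓛 | phiT 𝓛 T M' = phiT 𝓛 T M}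

/-- `σ_T(M)`: the closed span of all `M' ∈ 𝓛` with `φ_T(M') = φ_T(M)`. -/
noncomputable def sigmaT (𝓛 : Set (Submodule ℂ H)) (T : H →L[ℂ] H) (M : Submodule ℂ H) :
    Submodule ℂ H :=
  (sSup {M' ∈ 𝓛 | phiT 𝓛 T M' = phiT 𝓛 T M}).topologicalClosure

/-- The kernel map `ω_T`. -/
noncomputable def omegaT (𝓛 : Set (Submodule ℂ H)) (T : H →L[ℂ] H) (M : Submodule ℂ H) :
    Submodule ℂ H × Submodule ℂ H :=
  (phiT 𝓛 T M, PsiT 𝓛 T M)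

/-- The rank-one operator `x ⊗ y : z ↦ ⟨z, y⟩ x`. -/
noncomputable def rankOne (x y : H) : H →L[ℂ] H :=
  (innerSL ℂ y).smulRight x

/-- The nest algebra of a subspace lattice. -/
def nestAlg (𝓛 : Set (Submodule ℂ H)) : Set (H →L[ℂ] H) :=
  {T | ∀ M ∈ 𝓛, ∀ v ∈ M, T v ∈ M}

/-- Lie module over the nest algebra. -/
def IsLieModule (𝓛 : Set (Submodule ℂ H)) (𝓜 : Submodule ℂ (H →L[ℂ] H)) : Prop :=
  ∀ A ∈ 𝓜, ∀ T ∈ nestAlg 𝓛, A.comp T - T.comp A ∈ 𝓜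

/-- Orthogonal projection of a vector onto a closed subspace (junk value `0` if not closed). -/
noncomputable def projVec (N : Submodule ℂ H) (z : H) : H := by
  classical
  exact if h : IsClosed (N : Set H) then
    have : CompleteSpace N := h.completeSpace_coe
    (N.orthogonalProjection z : H)
  else 0

/-!
Choose `x ∈ M ⊓ Nᗮ` lying in no `K ∈ 𝓛` with `K < M` and orthogonal to no `K ∈ 𝓛` with `N < K`;
then `M_x = M` and `M̂_x = N`. Because `𝓛` is totally ordered, each such `K` (resp. `Kᗮ`) meets
`M ⊓ Nᗮ` in a proper closed subspace. Separability replaces the chains `{K < M}` and `{N < K}`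
by countable cofinal, resp. coinitial, subchains, and countably many proper closed subspaces of
the Banach space `M ⊓ Nᗮ` can be avoided by the Baire category theorem.
-/

section CountableChain

variable {X A : Type*} [TopologicalSpace X] [SecondCountableTopology X]
  [SetLike A X] [PartialOrder A] [IsConcreteLE A X] {S : Set A}

theorem IsChain.exists_countable_cofinal_of_isClosed (hS : IsChain (· ≤ ·) S)
    (hcl : ∀ s ∈ S, IsClosed (s : Set X)) :
    ∃ T ⊆ S, T.Countable ∧ ∀ s ∈ S, ∃ t ∈ T, s ≤ t := by
  set U : Set X := ⋃ s ∈ S, (s : Set X)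
  have hmem (u : U) : ∃ s ∈ S, (u : X) ∈ s := by
    obtain ⟨s, hs, hus⟩ := Set.mem_iUnion₂.1 u.2
    exact ⟨s, hs, hus⟩
  choose f hfS hf using hmem
  obtain ⟨c, hc, hcd⟩ := TopologicalSpace.exists_countable_dense U
  have hgreatest : {s ∈ S | ∀ k ∈ S, k ≤ s}.Subsingleton :=
    fun s hs t ht => le_antisymm (ht.2 s hs.1) (hs.2 t ht.1)
  refine ⟨f '' c ∪ {s ∈ S | ∀ k ∈ S, k ≤ s}, ?_, (hc.image f).union hgreatest.countable, ?_⟩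
  · rintro _ (⟨u, -, rfl⟩ | hs)
    exacts [hfS u, hs.1]
  intro s hs
  by_cases h : ∃ u ∈ c, s ≤ f u
  · obtain ⟨u, hu, hsu⟩ := h
    exact ⟨f u, Or.inl ⟨u, hu, rfl⟩, hsu⟩
  push Not at h
  refine ⟨s, Or.inr ⟨hs, fun k hk => SetLike.coe_subset_coe.1 fun x hx => ?_⟩, le_rfl⟩
  -- `s` contains the dense subset `c` of `U`, hence all of `U ⊇ k`
  have hcs : closure c ⊆ Subtype.val ⁻¹' (s : Set X) :=
    closure_minimal
      (fun u hu => SetLike.coe_subset_coe.2 ((hS.total (hfS u) hs).resolve_right (h u hu)) (hf u))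
      ((hcl s hs).preimage continuous_subtype_val)
  exact hcs (hcd ⟨x, Set.mem_biUnion hk hx⟩)

theorem IsChain.exists_countable_coinitial_of_isClosed (hS : IsChain (· ≤ ·) S)
    (hcl : ∀ s ∈ S, IsClosed (s : Set X)) :
    ∃ T ⊆ S, T.Countable ∧ ∀ s ∈ S, ∃ t ∈ T, t ≤ s := by
  obtain ⟨T, hTS, hT, hU⟩ := TopologicalSpace.isOpen_biUnion_countable S (fun s : A => (s : Set X)ᶜ)
    fun s hs => (hcl s hs).isOpen_compl
  have hleast : {s ∈ S | ∀ k ∈ S, s ≤ k}.Subsingleton :=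
    fun s hs t ht => le_antisymm (hs.2 t ht.1) (ht.2 s hs.1)
  refine ⟨T ∪ {s ∈ S | ∀ k ∈ S, s ≤ k}, Set.union_subset hTS (Set.sep_subset _ _),
    hT.union hleast.countable, ?_⟩
  intro s hs
  by_cases h : ∃ t ∈ T, t ≤ s
  · obtain ⟨t, ht, hts⟩ := h
    exact ⟨t, Or.inl ht, hts⟩
  push Not at h
  refine ⟨s, Or.inr ⟨hs, fun k hk => SetLike.coe_subset_coe.1 fun x hx => ?_⟩, le_rfl⟩
  by_contra hxk
  -- Lindelöf: a point outside `k` lies outside some `t ∈ T`, but `s ≤ t`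
  obtain ⟨t, ht, hxt⟩ := Set.mem_iUnion₂.1 (hU ▸ Set.mem_biUnion hk hxk :
    x ∈ ⋃ t ∈ T, (t : Set X)ᶜ)
  exact hxt (SetLike.coe_subset_coe.2 ((hS.total (hTS ht) hs).resolve_left (h t ht)) hx)

end CountableChain

theorem Submodule.exists_mem_forall_notMem_of_countable {𝕜 E : Type*}
    [NontriviallyNormedField 𝕜] [NormedAddCommGroup E] [NormedSpace 𝕜 E] [CompleteSpace E]
    {G : Submodule 𝕜 E} (hG : IsClosed (G : Set E)) {C : Set (Submodule 𝕜 E)}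
    (hC : C.Countable) (hcl : ∀ p ∈ C, IsClosed (p : Set E)) (hne : ∀ p ∈ C, ¬G ≤ p) :
    ∃ x ∈ G, ∀ p ∈ C, x ∉ p := by
  have : CompleteSpace G := hG.completeSpace_coe
  have hdense : Dense (⋂ p ∈ C, ((p.comap G.subtype : Set G)ᶜ)) := by
    refine dense_biInter_of_isOpen
      (fun p hp => ((hcl p hp).preimage continuous_subtype_val).isOpen_compl) hC
      fun p hp => ?_
    rw [← interior_eq_empty_iff_dense_compl, ← Set.not_nonempty_iff_eq_empty]
    intro hint
    have htop := Submodule.eq_top_of_nonempty_interior' _ hint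
    exact hne p hp fun x hx => by simpa using htop.ge (Submodule.mem_top (x := ⟨x, hx⟩))
  obtain ⟨x, hx⟩ := hdense.nonempty
  exact ⟨x, x.2, fun p hp => by simpa using Set.mem_iInter₂.1 hx p hp⟩

section Orthogonal

variable {𝕜 E : Type*} [RCLike 𝕜] [NormedAddCommGroup E] [InnerProductSpace 𝕜 E]
  {K M N : Submodule 𝕜 E} [N.HasOrthogonalProjection]

theorem Submodule.not_inf_orthogonal_le_of_lt (hNM : N < M) (hKM : K < M)
    (hKN : K ≤ N ∨ N ≤ K) : ¬M ⊓ Nᗮ ≤ K := by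
  intro h
  have hM : M ≤ K ⊔ N :=
    calc M = N ⊔ Nᗮ ⊓ M := (sup_orthogonal_inf_of_hasOrthogonalProjection hNM.le).symm
      _ ≤ K ⊔ N := sup_le le_sup_right ((inf_comm Nᗮ M).le.trans h |>.trans le_sup_left)
  rcases hKN with hKN | hNK
  · exact hNM.not_ge (hM.trans (sup_le hKN le_rfl))
  · exact hKM.not_ge (hM.trans (sup_le le_rfl hNK))

theorem Submodule.not_inf_orthogonal_le_orthogonal_of_lt (hNM : N < M) (hNK : N < K)
    (hKM : K ≤ M ∨ M ≤ K) : ¬M ⊓ Nᗮ ≤ Kᗮ := by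
  intro h
  have hKM_le : K ⊓ M ≤ N :=
    calc K ⊓ M = N ⊔ Nᗮ ⊓ (K ⊓ M) :=
          (sup_orthogonal_inf_of_hasOrthogonalProjection (le_inf hNK.le hNM.le)).symm
      _ ≤ N ⊔ K ⊓ Kᗮ := sup_le_sup_left (le_inf (inf_le_right.trans inf_le_left)
          ((le_inf (inf_le_right.trans inf_le_right) inf_le_left).trans h)) _
      _ = N := by rw [K.inf_orthogonal_eq_bot, sup_bot_eq]
  rcases hKM with hKM | hMK
  · exact hNK.not_ge ((le_inf le_rfl hKM).trans hKM_le)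
  · exact hNM.not_ge ((le_inf hMK le_rfl).trans hKM_le)

end Orthogonal

section SubspaceLattice

variable {E : Type*} [NormedAddCommGroup E] [InnerProductSpace ℂ E] {𝓛 : Set (Submodule ℂ E)}
  {x : E} {M N : Submodule ℂ E}

theorem Mx_eq_of_forall_le (hM : M ∈ 𝓛) (hx : x ∈ M) (h : ∀ K ∈ 𝓛, x ∈ K → M ≤ K) :
    Mx 𝓛 x = M :=
  le_antisymm (sInf_le ⟨hM, hx⟩) (le_sInf fun K hK => h K hK.1 hK.2)

theorem Mhat_eq_of_forall_le (hN : N ∈ 𝓛) (hNc : IsClosed (N : Set E)) (hx : x ∈ Nᗮ)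
    (h : ∀ K ∈ 𝓛, x ∈ Kᗮ → K ≤ N) : Mhat 𝓛 x = N := by
  unfold Mhat
  refine le_antisymm (Submodule.topologicalClosure_minimal _
    (sSup_le fun K hK => h K hK.1 ((K.mem_orthogonal' x).2 hK.2)) hNc)
    ((le_sSup ?_).trans (Submodule.le_topologicalClosure _))
  exact ⟨hN, (N.mem_orthogonal' x).1 hx⟩

end SubspaceLattice

theorem stmt_0 (𝓛 : Set (Submodule ℂ H)) (h𝓛 : IsNest 𝓛)
    (N M : Submodule ℂ H) (hN : N ∈ 𝓛) (hM : M ∈ 𝓛) (hNM : N < M) :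
    ∃ x : H, Mx 𝓛 x = M ∧ Mhat 𝓛 x = N := by
  obtain ⟨⟨hcl, -, -, -, -⟩, htotal⟩ := h𝓛
  have : CompleteSpace N := (hcl N hN).completeSpace_coe
  have hchain (S : Set (Submodule ℂ H)) (hS : S ⊆ 𝓛) : IsChain (· ≤ ·) S :=
    fun K hK L hL _ => htotal K (hS hK) L (hS hL)
  obtain ⟨Tlt, hTlt, hTlt_count, hTlt_cofinal⟩ :=
    (hchain {K | K ∈ 𝓛 ∧ K < M} fun K hK => hK.1).exists_countable_cofinal_of_isClosed
      fun K hK => hcl K hK.1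
  obtain ⟨Tgt, hTgt, hTgt_count, hTgt_coinitial⟩ :=
    (hchain {K | K ∈ 𝓛 ∧ N < K} fun K hK => hK.1).exists_countable_coinitial_of_isClosed
      fun K hK => hcl K hK.1
  obtain ⟨x, hxG, hx⟩ := Submodule.exists_mem_forall_notMem_of_countable (G := M ⊓ Nᗮ)
    ((hcl M hM).inter N.isClosed_orthogonal) (hTlt_count.union (hTgt_count.image (·ᗮ)))
    (by rintro _ (hK | ⟨K, -, rfl⟩); exacts [hcl _ (hTlt hK).1, K.isClosed_orthogonal])
    (by
      rintro _ (hK | ⟨K, hK, rfl⟩)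
      · exact Submodule.not_inf_orthogonal_le_of_lt hNM (hTlt hK).2 (htotal _ (hTlt hK).1 N hN)
      · exact Submodule.not_inf_orthogonal_le_orthogonal_of_lt hNM (hTgt hK).2
          (htotal _ (hTgt hK).1 M hM))
  refine ⟨x, Mx_eq_of_forall_le hM hxG.1 fun K hK hxK => ?_,
    Mhat_eq_of_forall_le hN (hcl N hN) hxG.2 fun K hK hxK => ?_⟩
  · by_contra hMK
    obtain ⟨L, hL, hKL⟩ :=
      hTlt_cofinal K ⟨hK, lt_of_le_not_ge ((htotal M hM K hK).resolve_left hMK) hMK⟩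
    exact hx L (Or.inl hL) (hKL hxK)
  · by_contra hKN
    obtain ⟨L, hL, hLK⟩ :=
      hTgt_coinitial K ⟨hK, lt_of_le_not_ge ((htotal K hK N hN).resolve_left hKN) hKN⟩
    exact hx _ (Or.inr ⟨L, hL, rfl⟩) (Submodule.orthogonal_le hLK hxK)
end

section
/- Let 𝓛 be a nest on a complex separable Hilbert space H and let T be a bounded operator on H. Then the kernel set Ω_T is totally ordered by componentwise inclusion: for all M₁, M₂ ∈ 𝓛, either (φ_T(M₁) ⊆ φ_T(M₂) and Ψ_T(M₁) ⊆ Ψ_T(M₂)) or (φ_T(M₂) ⊆ φ_T(M₁) and Ψ_T(M₂) ⊆ Ψ_T(M₁)). -/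
open scoped InnerProductSpace

variable {H : Type*} [NormedAddCommGroup H] [InnerProductSpace ℂ H]
  [CompleteSpace H] [TopologicalSpace.SeparableSpace H]

section KernelMap

variable {E : Type*} [NormedAddCommGroup E] [InnerProductSpace ℂ E]
  {𝓛 : Set (Submodule ℂ E)} {T : E →L[ℂ] E}

theorem IsNest.isChain (h𝓛 : IsNest 𝓛) : IsChain (· ≤ ·) 𝓛 :=
  fun M hM N hN _ => h𝓛.2 M hM N hN

theorem phiT_mono : Monotone (phiT 𝓛 T) := fun _ _ hMN =>
  Submodule.topologicalClosure_mono <| sSup_le_sSup fun _ ⟨hM', hTM'⟩ =>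
    ⟨hM', fun v hv => hMN (hTM' v hv)⟩

theorem PsiT_le_self {M : Submodule ℂ E} (hM : M ∈ 𝓛) : PsiT 𝓛 T M ≤ M :=
  sInf_le ⟨hM, rfl⟩

theorem PsiT_congr_phiT {M N : Submodule ℂ E} (h : phiT 𝓛 T M = phiT 𝓛 T N) :
    PsiT 𝓛 T M = PsiT 𝓛 T N := by
  simp only [PsiT, h]

/-- If `φ_T(M₁) ⊊ φ_T(M₂)`, every `M' ∈ 𝓛` with `φ_T(M') = φ_T(M₂)` lies above `M₁`
(otherwise `M' ≤ M₁` would force `φ_T(M₂) ≤ φ_T(M₁)`), hence above `Ψ_T(M₁) ≤ M₁`. -/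
theorem PsiT_mono_of_isChain (h𝓛 : IsChain (· ≤ ·) 𝓛) {M₁ M₂ : Submodule ℂ E}
    (h₁ : M₁ ∈ 𝓛) (hle : M₁ ≤ M₂) : PsiT 𝓛 T M₁ ≤ PsiT 𝓛 T M₂ := by
  have hphi : phiT 𝓛 T M₁ ≤ phiT 𝓛 T M₂ := phiT_mono hle
  by_cases heq : phiT 𝓛 T M₁ = phiT 𝓛 T M₂
  · exact (PsiT_congr_phiT heq).le
  refine le_sInf fun M' ⟨hM', hphiM'⟩ => ?_
  have hM₁M' : M₁ ≤ M' := (h𝓛.total h₁ hM').resolve_right fun hM'M₁ =>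
    heq (hphi.antisymm (hphiM' ▸ phiT_mono hM'M₁))
  exact (PsiT_le_self h₁).trans hM₁M'

theorem omegaT_mono_of_isChain (h𝓛 : IsChain (· ≤ ·) 𝓛) {M₁ M₂ : Submodule ℂ E}
    (h₁ : M₁ ∈ 𝓛) (hle : M₁ ≤ M₂) : omegaT 𝓛 T M₁ ≤ omegaT 𝓛 T M₂ :=
  Prod.mk_le_mk.2 ⟨phiT_mono hle, PsiT_mono_of_isChain h𝓛 h₁ hle⟩

end KernelMap

theorem stmt_9 (𝓛 : Set (Submodule ℂ H)) (h𝓛 : IsNest 𝓛)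
    (T : H →L[ℂ] H) (M₁ M₂ : Submodule ℂ H) (h₁ : M₁ ∈ 𝓛) (h₂ : M₂ ∈ 𝓛) :
    (phiT 𝓛 T M₁ ≤ phiT 𝓛 T M₂ ∧ PsiT 𝓛 T M₁ ≤ PsiT 𝓛 T M₂) ∨
    (phiT 𝓛 T M₂ ≤ phiT 𝓛 T M₁ ∧ PsiT 𝓛 T M₂ ≤ PsiT 𝓛 T M₁) := by
  rcases h𝓛.isChain.total h₁ h₂ with h | h
  · exact .inl (Prod.mk_le_mk.1 (omegaT_mono_of_isChain h𝓛.isChain h₁ h))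
  · exact .inr (Prod.mk_le_mk.1 (omegaT_mono_of_isChain h𝓛.isChain h₂ h))
end
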